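/- For A ⊆ ℝ^d measurable and 0 ≤ θ' ≤ θ ≤ π/2 with θ/θ' an integer k, RS_A(θ) ≤ k · RS_A(θ'). (Subadditivity of rotation sensitivity along an arithmetic progression of angles.) -/
import Mathlib


open MeasureTheory ProbabilityTheory Real

/-- The standard Gaussian measure on `ℝ^d`. -/
noncomputable def stdGaussian (d : ℕ) : Measure (Fin d → ℝ) :=
  Measure.pi fun _ => gaussianReal 0 1

/-- Rotation sensitivity `RS_A(θ) = P[1_A(z) ≠ 1_A(z')]` where `(z, z')` is a
`cos θ`-correlated `d`-dimensional Gaussian pair, realized as `z = g`,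
`z' = cos θ ⬝ g + sin θ ⬝ g'` with `g, g'` independent standard `d`-dimensional Gaussians. -/
noncomputable def RS (d : ℕ) (A : Set (Fin d → ℝ)) (θ : ℝ) : ENNReal :=
  ((stdGaussian d).prod (stdGaussian d))
    {p | (p.1 ∈ A) ≠ ((fun i => Real.cos θ * p.1 i + Real.sin θ * p.2 i) ∈ A)}

/-- Pushing forward a density along a measurable map. -/
lemma aux_map_withDensity {α β : Type*} [MeasurableSpace α] [MeasurableSpace β]
    (μ : Measure α) {T : α → β} (hT : Measurable T) {g : β → ENNReal} (hg : Measurable g) :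
    Measure.map T (μ.withDensity (g ∘ T)) = (Measure.map T μ).withDensity g := by
  ext s hs
  rw [Measure.map_apply hT hs, withDensity_apply _ (hT hs), withDensity_apply _ hs,
    setLIntegral_map hs hg hT]
  rfl

/-- The 2D standard Gaussian as a density against Lebesgue on `ℝ × ℝ`. -/
lemma gauss2 : (gaussianReal 0 1).prod (gaussianReal 0 1)
    = (volume : Measure (ℝ × ℝ)).withDensity
        (fun p => gaussianPDF 0 1 p.1 * gaussianPDF 0 1 p.2) := by
  have h1 : gaussianReal 0 1 = volume.withDensity (gaussianPDF 0 1) :=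
    gaussianReal_of_var_ne_zero 0 one_ne_zero
  refine Measure.prod_eq fun s t hs ht => ?_
  rw [withDensity_apply _ (hs.prod ht), Measure.volume_eq_prod, ← Measure.prod_restrict,
    lintegral_prod_mul (measurable_gaussianPDF _ _).aemeasurable
      (measurable_gaussianPDF _ _).aemeasurable,
    h1, withDensity_apply _ hs, withDensity_apply _ ht]

noncomputable def rotLM (c s : ℝ) : (ℝ × ℝ) →ₗ[ℝ] (ℝ × ℝ) where
  toFun p := (c * p.1 + s * p.2, -s * p.1 + c * p.2)
  map_add' p q := by ext <;> simp <;> ring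
  map_smul' r p := by ext <;> simp <;> ring

lemma rotLM_det (c s : ℝ) : LinearMap.det (rotLM c s) = c ^ 2 + s ^ 2 := by
  rw [← LinearMap.det_toMatrix (Module.Basis.finTwoProd ℝ), Matrix.det_fin_two]
  simp [LinearMap.toMatrix_apply, rotLM, Module.Basis.finTwoProd_zero, Module.Basis.finTwoProd_one,
    Module.Basis.coe_finTwoProd_repr]
  ring

lemma rot_pdf_mul {u v x y : ℝ} (h : u ^ 2 + v ^ 2 = x ^ 2 + y ^ 2) :
    gaussianPDFReal 0 1 u * gaussianPDFReal 0 1 v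
      = gaussianPDFReal 0 1 x * gaussianPDFReal 0 1 y := by
  simp only [gaussianPDFReal, NNReal.coe_one, mul_one, sub_zero]
  rw [mul_mul_mul_comm, ← Real.exp_add, mul_mul_mul_comm, ← Real.exp_add]
  congr 1
  congr 1
  linarith

lemma rot_mp_volume {c s : ℝ} (h : c ^ 2 + s ^ 2 = 1) :
    MeasurePreserving (fun p : ℝ × ℝ => (c * p.1 + s * p.2, -s * p.1 + c * p.2))
      volume volume := by
  have hdet : LinearMap.det (rotLM c s) ≠ 0 := by rw [rotLM_det, h]; norm_num
  refine ⟨by fun_prop, ?_⟩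
  have := Measure.map_linearMap_addHaar_eq_smul_addHaar (volume : Measure (ℝ × ℝ)) hdet
  rw [rotLM_det, h] at this
  simpa [rotLM, LinearMap.coe_mk, AddHom.coe_mk] using this

lemma rot_mp_gauss2 {c s : ℝ} (h : c ^ 2 + s ^ 2 = 1) :
    MeasurePreserving (fun p : ℝ × ℝ => (c * p.1 + s * p.2, -s * p.1 + c * p.2))
      ((gaussianReal 0 1).prod (gaussianReal 0 1))
      ((gaussianReal 0 1).prod (gaussianReal 0 1)) := by
  set T := fun p : ℝ × ℝ => (c * p.1 + s * p.2, -s * p.1 + c * p.2) with hT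
  have hTm : Measurable T := by fun_prop
  set ρ : ℝ × ℝ → ENNReal := fun p => gaussianPDF 0 1 p.1 * gaussianPDF 0 1 p.2 with hρdef
  have hρ : Measurable ρ := by
    exact ((measurable_gaussianPDF 0 1).comp measurable_fst).mul
      ((measurable_gaussianPDF 0 1).comp measurable_snd)
  have hcomp : ρ ∘ T = ρ := by
    funext p
    simp only [Function.comp, hρdef, hT, gaussianPDF]
    rw [← ENNReal.ofReal_mul (gaussianPDFReal_nonneg _ _ _),
      ← ENNReal.ofReal_mul (gaussianPDFReal_nonneg _ _ _)]
    exact congrArg _ (rot_pdf_mul (by nlinarith [h]))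
  refine ⟨hTm, ?_⟩
  rw [gauss2]
  calc Measure.map T ((volume : Measure (ℝ × ℝ)).withDensity ρ)
      = Measure.map T ((volume : Measure (ℝ × ℝ)).withDensity (ρ ∘ T)) := by rw [hcomp]
    _ = (Measure.map T (volume : Measure (ℝ × ℝ))).withDensity ρ :=
        aux_map_withDensity _ hTm hρ
    _ = (volume : Measure (ℝ × ℝ)).withDensity ρ := by rw [(rot_mp_volume h).map_eq]

lemma rot_mp_std (d : ℕ) {c s : ℝ} (h : c ^ 2 + s ^ 2 = 1) :
    MeasurePreserving
      (fun p : (Fin d → ℝ) × (Fin d → ℝ) =>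
        ((fun i => c * p.1 i + s * p.2 i), (fun i => -s * p.1 i + c * p.2 i)))
      ((stdGaussian d).prod (stdGaussian d)) ((stdGaussian d).prod (stdGaussian d)) := by
  have hE := measurePreserving_arrowProdEquivProdArrow ℝ ℝ (Fin d)
    (fun _ => gaussianReal 0 1) (fun _ => gaussianReal 0 1)
  have hpi := measurePreserving_pi (fun _ : Fin d => (gaussianReal 0 1).prod (gaussianReal 0 1))
    (fun _ : Fin d => (gaussianReal 0 1).prod (gaussianReal 0 1))
    (f := fun _ p => (c * p.1 + s * p.2, -s * p.1 + c * p.2)) (fun _ => rot_mp_gauss2 h)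
  have hcomp := (hE.comp hpi).comp (hE.symm _)
  exact hcomp

lemma mem_ne_measurableSet {γ : Type*} [MeasurableSpace γ] {P Q : Set γ}
    (hP : MeasurableSet P) (hQ : MeasurableSet Q) :
    MeasurableSet {x | (x ∈ P) ≠ (x ∈ Q)} := by
  have : {x | (x ∈ P) ≠ (x ∈ Q)} = (P \ Q) ∪ (Q \ P) := by
    ext x
    by_cases hx : x ∈ P <;> by_cases hy : x ∈ Q <;>
      simp [Set.mem_setOf_eq, hx, hy]
  rw [this]
  exact (hP.diff hQ).union (hQ.diff hP)


/-- Subadditivity of rotation sensitivity: if `0 ≤ θ' ≤ θ ≤ π/2` with `θ = k θ'` for an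
integer `k`, then `RS_A(θ) ≤ k ⬝ RS_A(θ')`. -/
theorem rotation_sensitivity_subadditive (d : ℕ) (A : Set (Fin d → ℝ))
    (hA : MeasurableSet A) (θ θ' : ℝ) (h0 : 0 ≤ θ') (hle : θ' ≤ θ) (hθ : θ ≤ π / 2)
    (k : ℕ) (hk : θ = k * θ') :
    RS d A θ ≤ k * RS d A θ' := by
  classical
  set μ := (stdGaussian d).prod (stdGaussian d) with hμ
  set Φ : ((Fin d → ℝ) × (Fin d → ℝ)) → ℕ → Prop := fun p j =>
    ((fun i => Real.cos ((j : ℝ) * θ') * p.1 i + Real.sin ((j : ℝ) * θ') * p.2 i) ∈ A) with hΦ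
  set E : ℕ → Set ((Fin d → ℝ) × (Fin d → ℝ)) := fun j => {p | Φ p j ≠ Φ p (j + 1)} with hE
  have hmeasf : ∀ c : ℝ, Measurable fun p : (Fin d → ℝ) × (Fin d → ℝ) =>
      (fun i => Real.cos c * p.1 i + Real.sin c * p.2 i) := by
    intro c
    fun_prop
  -- the base set
  have hSmeas : MeasurableSet {q : (Fin d → ℝ) × (Fin d → ℝ) |
      (q.1 ∈ A) ≠ ((fun i => Real.cos θ' * q.1 i + Real.sin θ' * q.2 i) ∈ A)} :=
    mem_ne_measurableSet (hA.preimage measurable_fst) (hA.preimage (hmeasf θ'))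
  -- each step has measure RS d A θ'
  have hstep : ∀ j : ℕ, μ (E j) = RS d A θ' := by
    intro j
    set α := (j : ℝ) * θ' with hα
    have hrot := rot_mp_std d (c := Real.cos α) (s := Real.sin α)
      (by rw [Real.cos_sq_add_sin_sq])
    have hset : E j = (fun p : (Fin d → ℝ) × (Fin d → ℝ) =>
        ((fun i => Real.cos α * p.1 i + Real.sin α * p.2 i),
         (fun i => -Real.sin α * p.1 i + Real.cos α * p.2 i))) ⁻¹'
        {q | (q.1 ∈ A) ≠ ((fun i => Real.cos θ' * q.1 i + Real.sin θ' * q.2 i) ∈ A)} := by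
      ext p
      simp only [hE, hΦ, Set.mem_setOf_eq, Set.mem_preimage]
      have e2 : (fun i => Real.cos θ' * (Real.cos α * p.1 i + Real.sin α * p.2 i)
          + Real.sin θ' * (-Real.sin α * p.1 i + Real.cos α * p.2 i))
          = fun i => Real.cos (((j : ℕ) + 1 : ℕ) * θ') * p.1 i
              + Real.sin (((j : ℕ) + 1 : ℕ) * θ') * p.2 i := by
        funext i
        have h1 : (((j : ℕ) + 1 : ℕ) : ℝ) * θ' = α + θ' := by push_cast [hα]; ring
        rw [h1, Real.cos_add, Real.sin_add]
        ring
      rw [← e2]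
    rw [hset, hrot.measure_preimage hSmeas.nullMeasurableSet]
    rfl
  -- the union bound
  have hsub : {p : (Fin d → ℝ) × (Fin d → ℝ) |
      (p.1 ∈ A) ≠ ((fun i => Real.cos θ * p.1 i + Real.sin θ * p.2 i) ∈ A)}
      ⊆ ⋃ j ∈ Finset.range k, E j := by
    intro p hp
    by_contra hcon
    simp only [Set.mem_iUnion, not_exists] at hcon
    have hall : ∀ j < k, Φ p j = Φ p (j + 1) := by
      intro j hj
      have h2 := hcon j (Finset.mem_range.mpr hj)
      simp only [hE, Set.mem_setOf_eq] at h2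
      exact not_ne_iff.mp h2
    have hchain : ∀ n : ℕ, n ≤ k → Φ p 0 = Φ p n := by
      intro n hn
      induction n with
      | zero => rfl
      | succ m ih =>
        rw [ih (Nat.le_of_succ_le hn), hall m (Nat.lt_of_succ_le hn)]
    have h0eq : (p.1 ∈ A) = Φ p 0 := by
      simp only [hΦ]
      congr 1
      funext i
      simp
    have hkeq : Φ p k = ((fun i => Real.cos θ * p.1 i + Real.sin θ * p.2 i) ∈ A) := by
      simp only [hΦ, hk]
    exact hp (by rw [h0eq, hchain k le_rfl, hkeq])
  calc RS d A θ ≤ μ (⋃ j ∈ Finset.range k, E j) := measure_mono hsub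
    _ ≤ ∑ j ∈ Finset.range k, μ (E j) := measure_biUnion_finset_le _ _
    _ = ∑ _j ∈ Finset.range k, RS d A θ' := Finset.sum_congr rfl (fun j _ => hstep j)
    _ = k * RS d A θ' := by simp [Finset.sum_const, nsmul_eq_mul]
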